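/- For every DBM m of dimension 2n, Strengthen(Strengthen(m)) = Strengthen(m). -/
import Mathlib


namespace Octagon

/-- A DBM of dimension `2*n` with entries in `ℚ ∪ {+∞}`. -/
abbrev DBM (n : ℕ) : Type := Fin (2 * n) → Fin (2 * n) → WithTop ℚ

/-- `bar i = i + 1` if `i` is even, `i - 1` if `i` is odd. -/
def bar {n : ℕ} (i : Fin (2 * n)) : Fin (2 * n) :=
  if h : (i : ℕ) % 2 = 0 then ⟨(i : ℕ) + 1, by have := i.isLt; omega⟩
  else ⟨(i : ℕ) - 1, by have := i.isLt; omega⟩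

/-- A DBM is closed iff its diagonal is zero and it satisfies the triangle inequality. -/
def Closed {n : ℕ} (m : DBM n) : Prop :=
  (∀ i, m i i = 0) ∧ ∀ i j k, m i j ≤ m i k + m k j

/-- A DBM is consistent iff its diagonal entries are nonnegative. -/
def Consistent {n : ℕ} (m : DBM n) : Prop :=
  ∀ i, 0 ≤ m i i

/-- A DBM is coherent iff `m[i,j] = m[bar j, bar i]` for all `i, j`. -/
def Coherent {n : ℕ} (m : DBM n) : Prop :=
  ∀ i j, m i j = m (bar j) (bar i)

/-- Incremental closure of `m` with the new constraint `x'_a - x'_b ≤ d`. -/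
def IncClose {n : ℕ} (m : DBM n) (a b : Fin (2 * n)) (d : ℚ) : DBM n :=
  fun i j =>
    min (m i j) <|
    min (m i a + (d : WithTop ℚ) + m b j) <|
    min (m i (bar b) + (d : WithTop ℚ) + m (bar a) j) <|
    min (m i (bar b) + (d : WithTop ℚ) + m (bar a) a + (d : WithTop ℚ) + m b j)
        (m i a + (d : WithTop ℚ) + m b (bar b) + (d : WithTop ℚ) + m (bar a) j)

/-- Halving on `ℚ ∪ {+∞}`, mapping `+∞` to `+∞`. -/
def halve : WithTop ℚ → WithTop ℚ := WithTop.map (fun x => x / 2)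

/-- Strengthening of a DBM. -/
def Strengthen {n : ℕ} (m : DBM n) : DBM n :=
  fun i j => min (m i j) (halve (m i (bar i) + m (bar j) j))

lemma bar_bar {n : ℕ} (i : Fin (2 * n)) : bar (bar i) = i := by
  have hi := i.isLt
  apply Fin.ext
  unfold bar
  by_cases h : (i : ℕ) % 2 = 0
  · rw [dif_pos h]
    rw [dif_neg (by simp; omega)]
    simp
  · rw [dif_neg h]
    rw [dif_pos (by simp; omega)]
    simp; omega

lemma halve_self_add (a : WithTop ℚ) : halve (a + a) = a := by
  cases a with
  | top => rfl
  | coe q =>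
    rw [← WithTop.coe_add, halve, WithTop.map_coe, WithTop.coe_inj]
    ring

lemma strengthen_bar {n : ℕ} (m : DBM n) (i : Fin (2 * n)) :
    Strengthen m i (bar i) = m i (bar i) := by
  unfold Strengthen
  rw [bar_bar, halve_self_add, min_self]

lemma strengthen_bar' {n : ℕ} (m : DBM n) (j : Fin (2 * n)) :
    Strengthen m (bar j) j = m (bar j) j := by
  unfold Strengthen
  rw [bar_bar, halve_self_add, min_self]

/-- Proposition (idempotence of strengthening). -/
theorem strengthen_idempotent {n : ℕ} (m : DBM n) :
    Strengthen (Strengthen m) = Strengthen m := by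
  funext i j
  conv_lhs => rw [Strengthen]
  rw [strengthen_bar, strengthen_bar']
  show min (Strengthen m i j) _ = _
  rw [Strengthen, min_assoc, min_self]

end Octagon
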